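/- arXiv:2410.17579 — 3 statements merged into one kernel-verified Lean document; each statement's English description precedes it below -/
import Mathlib

section
/- Let ι be a finite type and f : Finset ι → ℝ a set function with f(∅) = 0 that is monotone (A ⊆ B implies f(A) ≤ f(B)) and submodular (for all A ⊆ B and x ∉ B, f(A ∪ {x}) − f(A) ≥ f(B ∪ {x}) − f(B)). Let b ≥ 1 with b ≤ |ι|, let A₀ = ∅, and for t = 0, …, b−1 let A_{t+1} = A_t ∪ {i_t} where i_t ∈ ι \ A_t maximizes f(A_t ∪ {i}) over i ∈ ι \ A_t. Then f(A_b) ≥ (1 − 1/e)·max{ f(S) : S ⊆ ι, |S| = b }. (This is the greedy approximation guarantee for monotone submodular maximization invoked by the paper to establish Theorem 3.3.) -/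
/-! Let `S` be a competitor with `|S| = b`. By submodularity, the gain of adding all of `S` to
the current greedy set `A_t` is at most the sum of the single-element gains, each of which is at
most the greedy gain `f(A_{t+1}) - f(A_t)`; with monotonicity this gives
`f(S) - f(A_t) ≤ b (f(A_{t+1}) - f(A_t))`. Hence the gap `f(S) - f(A_t)` shrinks by a factor
`1 - 1/b` per step, and after `b` steps it is at most `(1 - 1/b)^b f(S) ≤ e⁻¹ f(S)`. -/

namespace Finset

variable {ι : Type*} [DecidableEq ι]

def IsSubmodular (f : Finset ι → ℝ) : Prop :=
  ∀ A B : Finset ι, A ⊆ B → ∀ x ∉ B, f (insert x B) - f B ≤ f (insert x A) - f A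

variable {f : Finset ι → ℝ}

theorem IsSubmodular.sub_le_sum_marginal (hf : IsSubmodular f) (B T : Finset ι) :
    f (B ∪ T) - f B ≤ ∑ x ∈ T \ B, (f (insert x B) - f B) := by
  induction T using Finset.induction_on with
  | empty => simp
  | @insert y T hyT ih =>
    by_cases hyB : y ∈ B
    · rwa [union_insert, insert_eq_of_mem (mem_union_left T hyB), insert_sdiff_of_mem T hyB]
    · have hy : y ∉ B ∪ T := by simp [hyB, hyT]
      have hmarg := hf B (B ∪ T) subset_union_left y hy
      rw [union_insert, insert_sdiff_of_notMem T hyB,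
        sum_insert fun h => hyT (mem_sdiff.1 h).1]
      linarith

theorem IsSubmodular.sub_le_mul_greedy_gain (hf : IsSubmodular f) (hmono : Monotone f)
    {A S : Finset ι} {k : ℕ} (hS : #S ≤ k) {i : ι}
    (hmax : ∀ j ∉ A, f (insert j A) ≤ f (insert i A)) :
    f S - f A ≤ k * (f (insert i A) - f A) := by
  have hgain : 0 ≤ f (insert i A) - f A := sub_nonneg.2 (hmono (subset_insert i A))
  have hcard : (#(S \ A) : ℝ) ≤ k := by exact_mod_cast (card_le_card sdiff_subset).trans hS
  calc f S - f A ≤ f (A ∪ S) - f A := by linarith [hmono (subset_union_right : S ⊆ A ∪ S)]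
    _ ≤ ∑ x ∈ S \ A, (f (insert x A) - f A) := hf.sub_le_sum_marginal A S
    _ ≤ #(S \ A) * (f (insert i A) - f A) := by
      rw [← nsmul_eq_mul]
      exact sum_le_card_nsmul _ _ _ fun x hx => by linarith [hmax x (mem_sdiff.1 hx).2]
    _ ≤ k * (f (insert i A) - f A) := mul_le_mul_of_nonneg_right hcard hgain

end Finset

theorem sub_le_one_sub_one_div_pow_mul {a : ℕ → ℝ} {c k : ℝ} {n : ℕ} (hk : 1 ≤ k)
    (hgain : ∀ t < n, c - a t ≤ k * (a (t + 1) - a t)) :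
    ∀ t ≤ n, c - a t ≤ (1 - 1 / k) ^ t * (c - a 0) := by
  have hk0 : 0 < k := by linarith
  have hq : 0 ≤ 1 - 1 / k := sub_nonneg.2 ((div_le_one hk0).2 hk)
  intro t
  induction t with
  | zero => simp
  | succ t ih =>
    intro ht
    have hstep : c - a (t + 1) ≤ (1 - 1 / k) * (c - a t) := by
      have hfrac : (c - a t) / k ≤ a (t + 1) - a t := (div_le_iff₀' hk0).2 (hgain t ht)
      rw [one_sub_mul, one_div_mul_eq_div]
      linarith
    calc c - a (t + 1) ≤ (1 - 1 / k) * (c - a t) := hstep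
      _ ≤ (1 - 1 / k) * ((1 - 1 / k) ^ t * (c - a 0)) :=
        mul_le_mul_of_nonneg_left (ih (Nat.le_of_succ_le ht)) hq
      _ = (1 - 1 / k) ^ (t + 1) * (c - a 0) := by ring

theorem greedy_submodular_approx_general
    {ι : Type*} [DecidableEq ι]
    (f : Finset ι → ℝ) (hf0 : f ∅ = 0)
    (hmono : ∀ A B : Finset ι, A ⊆ B → f A ≤ f B)
    (hsub : ∀ A B : Finset ι, A ⊆ B → ∀ x ∉ B,
      f (insert x B) - f B ≤ f (insert x A) - f A)
    (b : ℕ)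
    (A : ℕ → Finset ι) (hA0 : A 0 = ∅)
    (hstep : ∀ t < b, ∃ i ∉ A t, A (t + 1) = insert i (A t) ∧
      ∀ j ∉ A t, f (insert j (A t)) ≤ f (insert i (A t))) :
    ∀ S : Finset ι, S.card = b →
      f (A b) ≥ (1 - 1 / Real.exp 1) * f S := by
  intro S hS
  have hmono' : Monotone f := fun _ _ h => hmono _ _ h
  obtain rfl | hb := Nat.eq_zero_or_pos b
  · simp [Finset.card_eq_zero.1 hS, hA0, hf0]
  have hb1 : (1 : ℝ) ≤ b := by exact_mod_cast hb
  have hgain : ∀ t < b, f S - f (A t) ≤ b * (f (A (t + 1)) - f (A t)) := fun t ht => by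
    obtain ⟨i, -, hAi, hmax⟩ := hstep t ht
    rw [hAi]
    exact Finset.IsSubmodular.sub_le_mul_greedy_gain hsub hmono' hS.le hmax
  have hgap := sub_le_one_sub_one_div_pow_mul hb1 hgain b le_rfl
  rw [hA0, hf0, sub_zero] at hgap
  have hfS : 0 ≤ f S := hf0 ▸ hmono' (Finset.empty_subset S)
  have hpow : (1 - 1 / (b : ℝ)) ^ b ≤ 1 / Real.exp 1 := by
    rw [one_div (Real.exp 1), ← Real.exp_neg]
    exact Real.one_sub_div_pow_le_exp_neg hb1
  linarith [mul_le_mul_of_nonneg_right hpow hfS]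

/-- **Greedy `(1 − 1/e)`-approximation for monotone submodular maximization**
(the classical guarantee invoked by the paper to establish its Theorem 3.3).
Let `f` be a monotone, submodular set function with `f(∅) = 0`. Starting from
`A₀ = ∅` and greedily adding, at each of `b` steps, an element not yet chosen that
maximizes `f(A_t ∪ {i})`, the output `A_b` satisfies
`f(A_b) ≥ (1 − 1/e)·f(S)` for every `S` with `|S| = b`. -/
theorem greedy_submodular_approx
    {ι : Type*} [Fintype ι] [DecidableEq ι]
    (f : Finset ι → ℝ) (hf0 : f ∅ = 0)
    (hmono : ∀ A B : Finset ι, A ⊆ B → f A ≤ f B)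
    (hsub : ∀ A B : Finset ι, A ⊆ B → ∀ x ∉ B,
      f (insert x B) - f B ≤ f (insert x A) - f A)
    (b : ℕ) (hb1 : 1 ≤ b) (hb2 : b ≤ Fintype.card ι)
    (A : ℕ → Finset ι) (hA0 : A 0 = ∅)
    (hstep : ∀ t < b, ∃ i ∉ A t, A (t + 1) = insert i (A t) ∧
      ∀ j ∉ A t, f (insert j (A t)) ≤ f (insert i (A t))) :
    ∀ S : Finset ι, S.card = b →
      f (A b) ≥ (1 - 1 / Real.exp 1) * f S :=
  greedy_submodular_approx_general f hf0 hmono hsub b A hA0 hstep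
end

section
/- Let G be a finite simple graph with node features x : V → ℝ^F, let v ∈ V, and let L ∈ ℕ. Let B_L(v) be the set of nodes u reachable from v by a walk of length at most L, and let G' = G[B_L(v)] be the induced subgraph of G on B_L(v), with features given by the restriction of x. Then the Weisfeiler-Lehman embedding of v at depth L computed in G' equals the Weisfeiler-Lehman embedding of v at depth L computed in G, i.e., a_{G'}^L(v) = a_G^L(v). (This expresses the Sufficiency property: the depth-L WL embedding of v is determined by the data within L hops of v, i.e., by its computation tree T_v^L.) -/
open Classical in
/-- The neighborhood of `v` in `G` as a `Finset`. -/
noncomputable def nbrFinset {V : Type*} [Fintype V] (G : SimpleGraph V) (v : V) :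
    Finset V :=
  Finset.univ.filter (fun u => G.Adj v u)

/-- The Weisfeiler-Lehman embeddings `a^ℓ : V → ℝ^F`, defined by `a^0(v) = x(v)` and
`a^ℓ(v) = (1/2)·(a^{ℓ−1}(v) + (1/deg v)·∑_{u ∈ N(v)} a^{ℓ−1}(u))` (the averaged sum
being `0` when `deg v = 0`, since the empty sum is `0`). -/
noncomputable def wlEmbed {V : Type*} [Fintype V] {F : ℕ} (G : SimpleGraph V)
    (x : V → Fin F → ℝ) : ℕ → V → Fin F → ℝ
  | 0 => x
  | (l + 1) => fun v =>
      (1 / 2 : ℝ) • (wlEmbed G x l v +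
        ((nbrFinset G v).card : ℝ)⁻¹ • ∑ u ∈ nbrFinset G v, wlEmbed G x l u)

/-- The `L`-ball around `v`: all nodes reachable from `v` by a walk of length at
most `L`. -/
def ball {V : Type*} (G : SimpleGraph V) (v : V) (L : ℕ) : Set V :=
  {u | ∃ w : G.Walk v u, w.length ≤ L}

/-!
A depth-`l` WL embedding of `u` only reads the features inside the `l`-ball around `u`, so it
is unchanged when `G` is replaced by its subgraph induced on any set `S` containing that ball:
by induction on `l`, the neighbors of `u` in `G[S]` are all its neighbors in `G` (they lie in
the ball), and their `(l-1)`-balls lie inside the `l`-ball of `u`. The theorem is the case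
`S = B_L(v)`, `u = v`.
-/

section

variable {V : Type*} (G : SimpleGraph V)

lemma ball_mono (u : V) {l m : ℕ} (hlm : l ≤ m) : ball G u l ⊆ ball G u m :=
  fun _ ⟨w, hw⟩ => ⟨w, hw.trans hlm⟩

lemma ball_subset_ball_succ_of_adj {u u' : V} (hadj : G.Adj u u') (l : ℕ) :
    ball G u' l ⊆ ball G u (l + 1) :=
  fun _ ⟨w, hw⟩ => ⟨SimpleGraph.Walk.cons hadj w, by simpa using hw⟩

lemma adj_mem_ball_succ {u u' : V} (hadj : G.Adj u u') (l : ℕ) : u' ∈ ball G u (l + 1) :=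
  ball_subset_ball_succ_of_adj G hadj l ⟨SimpleGraph.Walk.nil, Nat.zero_le l⟩

variable [Fintype V]

lemma mem_nbrFinset {u u' : V} : u' ∈ nbrFinset G u ↔ G.Adj u u' := by
  simp [nbrFinset]

lemma map_nbrFinset_induce {S : Set V} [Fintype S] (u : S) (hS : ∀ a ∈ nbrFinset G u, a ∈ S) :
    (nbrFinset (G.induce S) u).map (Function.Embedding.subtype (· ∈ S)) = nbrFinset G u := by
  ext a
  simp only [Finset.mem_map, mem_nbrFinset, SimpleGraph.comap_adj,
    Function.Embedding.subtype_apply]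
  exact ⟨fun ⟨b, hb, hba⟩ => hba ▸ hb,
    fun ha => ⟨⟨a, hS a ((mem_nbrFinset G).2 ha)⟩, ha, rfl⟩⟩

theorem wlEmbed_induce_of_ball_subset {F : ℕ} (x : V → Fin F → ℝ) {S : Set V} [Fintype S]
    (l : ℕ) (u : S) (hS : ball G u l ⊆ S) :
    wlEmbed (G.induce S) (fun w => x w.1) l u = wlEmbed G x l u := by
  induction l generalizing u with
  | zero => rfl
  | succ l ih =>
    have hnbr : ∀ a ∈ nbrFinset G u, a ∈ S := fun a ha =>
      hS (adj_mem_ball_succ G ((mem_nbrFinset G).1 ha) l)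
    have hsum : ∑ a ∈ nbrFinset (G.induce S) u, wlEmbed (G.induce S) (fun w => x w.1) l a =
        ∑ a ∈ nbrFinset G u, wlEmbed G x l a := by
      rw [← map_nbrFinset_induce G u hnbr, Finset.sum_map]
      refine Finset.sum_congr rfl fun a ha => ih a ?_
      exact (ball_subset_ball_succ_of_adj G ((mem_nbrFinset (G.induce S)).1 ha) l).trans hS
    have hcard : (nbrFinset (G.induce S) u).card = (nbrFinset G u).card := by
      rw [← map_nbrFinset_induce G u hnbr, Finset.card_map]
    simp only [wlEmbed, hsum, hcard, ih u ((ball_mono G u l.le_succ).trans hS)]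

end

/-- **Sufficiency of the computation tree for WL embeddings.** The depth-`L` WL
embedding of `v` computed in the subgraph induced on the `L`-ball `B_L(v)` (the data
of the computation tree `T_v^L`) equals the depth-`L` WL embedding of `v` computed
in the whole graph `G`. -/
theorem wlEmbed_ball_sufficiency
    {V : Type*} [Fintype V] {F : ℕ} (G : SimpleGraph V)
    (x : V → Fin F → ℝ) (v : V) (L : ℕ) :
    letI : Fintype ↥(ball G v L) := Fintype.ofFinite _
    wlEmbed (G.induce (ball G v L)) (fun u => x u.1) L
        ⟨v, ⟨SimpleGraph.Walk.nil, by simp⟩⟩ =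
      wlEmbed G x L v := by
  let : Fintype ↥(ball G v L) := Fintype.ofFinite _
  exact wlEmbed_induce_of_ball_subset G x L _ subset_rfl
end

section
/- Let ι be a finite type and f : Finset ι → ℝ a monotone and submodular set function. Then for every A ⊆ ι and every nonempty finite B ⊆ ι, there exists x ∈ B with f(A ∪ {x}) − f(A) ≥ (f(B) − f(A)) / |B|. (This is the key per-step marginal-gain lemma underlying the greedy (1 − 1/e) guarantee used for the paper's Theorem 3.3: at each iteration the best available element closes at least a 1/|B| fraction of the gap to the value of any target set B.) -/
/-!
Adding the elements of `B` to `A` one at a time, submodularity bounds each increment by the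
marginal gain of that element at `A` itself, so `f (A ∪ B) - f A` is at most the sum of these
gains over `B`; monotonicity gives `f B ≤ f (A ∪ B)`. Some term of a sum over `B` is at least
the average, i.e. `1 / |B|` of the total.
-/

open Finset

theorem Finset.exists_div_card_le_of_le_sum {α K : Type*} [Field K] [LinearOrder K]
    [IsStrictOrderedRing K] {s : Finset α} (hs : s.Nonempty) {g : α → K} {c : K}
    (hc : c ≤ ∑ x ∈ s, g x) : ∃ x ∈ s, c / #s ≤ g x := by
  refine exists_le_of_sum_le hs ?_
  rwa [sum_const, nsmul_eq_mul, mul_div_cancel₀ _ (by simpa using hs.ne_empty)]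

section Submodular

variable {α : Type*} [DecidableEq α] {f : Finset α → ℝ}

/-- For `x ∈ B \ A` the left side vanishes and monotonicity makes the right side nonnegative. -/
theorem marginal_le_marginal_of_subset (hmono : ∀ A B : Finset α, A ⊆ B → f A ≤ f B)
    (hsub : ∀ A B : Finset α, A ⊆ B → ∀ x ∉ B,
      f (insert x B) - f B ≤ f (insert x A) - f A)
    {A B : Finset α} (hAB : A ⊆ B) (x : α) :
    f (insert x B) - f B ≤ f (insert x A) - f A := by
  by_cases hxB : x ∈ B
  · have := hmono A (insert x A) (subset_insert x A)
    rw [insert_eq_of_mem hxB]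
    linarith
  · exact hsub A B hAB x hxB

theorem sub_le_sum_marginal (hmono : ∀ A B : Finset α, A ⊆ B → f A ≤ f B)
    (hsub : ∀ A B : Finset α, A ⊆ B → ∀ x ∉ B,
      f (insert x B) - f B ≤ f (insert x A) - f A)
    (A C : Finset α) : f (A ∪ C) - f A ≤ ∑ x ∈ C, (f (insert x A) - f A) := by
  induction C using Finset.induction_on with
  | empty => simp
  | insert y C hyC ih =>
    have := marginal_le_marginal_of_subset hmono hsub (subset_union_left (s₁ := A) (s₂ := C)) y
    rw [union_insert, sum_insert hyC]
    linarith

end Submodular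

theorem submodular_marginal_gain_general
    {ι : Type*} [DecidableEq ι]
    (f : Finset ι → ℝ)
    (hmono : ∀ A B : Finset ι, A ⊆ B → f A ≤ f B)
    (hsub : ∀ A B : Finset ι, A ⊆ B → ∀ x ∉ B,
      f (insert x B) - f B ≤ f (insert x A) - f A)
    (A B : Finset ι) (hB : B.Nonempty) :
    ∃ x ∈ B, f (insert x A) - f A ≥ (f B - f A) / (B.card : ℝ) := by
  have hunion := hmono B (A ∪ B) subset_union_right
  have hgains := sub_le_sum_marginal hmono hsub A B
  exact exists_div_card_le_of_le_sum hB (by linarith)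

/-- **Per-step marginal-gain lemma for monotone submodular functions** (the key step
behind the greedy `(1 − 1/e)` guarantee used for the paper's Theorem 3.3).
For every set `A` and every nonempty target set `B`, some element `x ∈ B` closes at
least a `1/|B|` fraction of the gap: `f(A ∪ {x}) − f(A) ≥ (f(B) − f(A)) / |B|`. -/
theorem submodular_marginal_gain
    {ι : Type*} [Fintype ι] [DecidableEq ι]
    (f : Finset ι → ℝ)
    (hmono : ∀ A B : Finset ι, A ⊆ B → f A ≤ f B)
    (hsub : ∀ A B : Finset ι, A ⊆ B → ∀ x ∉ B,
      f (insert x B) - f B ≤ f (insert x A) - f A)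
    (A B : Finset ι) (hB : B.Nonempty) :
    ∃ x ∈ B, f (insert x A) - f A ≥ (f B - f A) / (B.card : ℝ) :=
  submodular_marginal_gain_general f hmono hsub A B hB
end
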